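/- Let M be a matroid on a finite ground set E, and let 𝓕 = (F_0, …, F_d) and 𝓕' = (F'_0, …, F'_{d'}) be flags of flats of M. Then 𝔠_{𝓕'} ⊆ 𝔠_𝓕 (as subsets of ℝ^E) if and only if {F'_0, …, F'_{d'}} ⊆ {F_0, …, F_d}. -/

import Mathlib

open scoped BigOperators

/-- The `0-1` indicator vector `e_F ∈ ℝ^E` of a subset `F ⊆ E`. -/
noncomputable def eVec {α : Type*} (F : Set α) : α → ℝ := F.indicator 1

/-- A flag of flats `∅ = F_0 ⊊ F_1 ⊊ ⋯ ⊊ F_d = E` of a matroid `M`. -/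
def IsFlag {α : Type*} (M : Matroid α) (d : ℕ) (𝓕 : Fin (d + 1) → Set α) : Prop :=
  (∀ j, M.IsFlat (𝓕 j)) ∧ StrictMono 𝓕 ∧ 𝓕 0 = ∅ ∧ 𝓕 (Fin.last d) = M.E

/-- The cone `𝔠_𝓕 = { Σ_j λ_j e_{F_j} : λ_j ≥ 0 for j = 1, …, d−1 }` of a flag. -/
def flagCone {α : Type*} (d : ℕ) (𝓕 : Fin (d + 1) → Set α) : Set (α → ℝ) :=
  { x | ∃ lam : Fin (d + 1) → ℝ,
      (∀ j : Fin (d + 1), (j : ℕ) ≠ 0 → (j : ℕ) ≠ d → 0 ≤ lam j) ∧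
      x = ∑ j, lam j • eVec (𝓕 j) }

/-!
The indicator vector of a set `F` lies in `𝔠_𝓕` only if `F` is one of the `F_j`. Indeed, if
`x ∈ 𝔠_𝓕` and every `F_j` containing `b ∈ F_d` also contains `a`, then `x b ≤ x a`, because the
coefficients `λ_j` that `x a` has in addition to those of `x b` are all nonnegative (`F_0 = ∅`
and `b ∈ F_d` rule out `j = 0, d`). So `F` is closed upwards for this preorder, hence contains the
smallest `F_j` through each of its points, and is the largest `F_j` it contains.
Conversely, when `|𝓕'| ⊆ |𝓕|` each generator of `𝔠_{𝓕'}` is a generator of `𝔠_𝓕` with the same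
sign constraint: both flags run from `∅` to `E` and `𝓕` is injective, so an inner `F'_j` is an
inner `F_i`.
-/

section FlagCone

variable {α : Type*} {d : ℕ} {𝓕 : Fin (d + 1) → Set α} {x : α → ℝ}

lemma mem_flagCone_iff :
    x ∈ flagCone d 𝓕 ↔ ∃ lam : Fin (d + 1) → ℝ,
      (∀ j, j ≠ 0 → j ≠ Fin.last d → 0 ≤ lam j) ∧ x = ∑ j, lam j • eVec (𝓕 j) := by
  simp only [flagCone, Set.mem_ofPred_eq, ne_eq, Fin.ext_iff, Fin.val_zero, Fin.val_last]

lemma eVec_mem_flagCone (𝓕 : Fin (d + 1) → Set α) (i : Fin (d + 1)) :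
    eVec (𝓕 i) ∈ flagCone d 𝓕 :=
  mem_flagCone_iff.2 ⟨Pi.single i 1, fun j _ _ => by by_cases h : j = i <;> simp [h], by
    simp [Pi.single_apply, ite_smul]⟩

lemma apply_eq_zero_of_mem_flagCone (hx : x ∈ flagCone d 𝓕) {b : α} (hb : ∀ j, b ∉ 𝓕 j) :
    x b = 0 := by
  obtain ⟨lam, -, rfl⟩ := hx
  simp [eVec, hb]

lemma apply_le_apply_of_mem_flagCone (hx : x ∈ flagCone d 𝓕) (h0 : 𝓕 0 = ∅) {a b : α}
    (hb : b ∈ 𝓕 (Fin.last d)) (hab : ∀ j, b ∈ 𝓕 j → a ∈ 𝓕 j) : x b ≤ x a := by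
  obtain ⟨lam, hlam, rfl⟩ := mem_flagCone_iff.1 hx
  simp only [Finset.sum_apply, Pi.smul_apply, smul_eq_mul]
  refine Finset.sum_le_sum fun j _ => ?_
  by_cases hbj : b ∈ 𝓕 j
  · simp [eVec, hbj, hab j hbj]
  by_cases haj : a ∈ 𝓕 j
  · have hj0 : j ≠ 0 := by rintro rfl; simp [h0] at haj
    have hjd : j ≠ Fin.last d := by rintro rfl; exact hbj hb
    simpa [eVec, hbj, haj] using hlam j hj0 hjd
  · simp [eVec, hbj, haj]

theorem mem_range_of_eVec_mem_flagCone (hmono : Monotone 𝓕) (h0 : 𝓕 0 = ∅) {F : Set α}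
    (hF : eVec F ∈ flagCone d 𝓕) : F ∈ Set.range 𝓕 := by
  classical
  have hF_last : F ⊆ 𝓕 (Fin.last d) := by
    intro b hb
    by_contra hb_last
    have := apply_eq_zero_of_mem_flagCone hF fun j hj => hb_last (hmono (Fin.le_last j) hj)
    simp [eVec, hb] at this
  have hup : ∀ k, ∀ b ∈ F, (∀ j, b ∈ 𝓕 j → k ≤ j) → 𝓕 k ⊆ F := by
    intro k b hb hk a ha
    by_contra haF
    have := apply_le_apply_of_mem_flagCone hF h0 (hF_last hb) fun j hj => hmono (hk j hj) ha
    norm_num [eVec, hb, haF] at this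
  obtain ⟨k₀, hk₀, hmax⟩ :=
    (Finset.univ.filter fun k => 𝓕 k ⊆ F).exists_max_image id ⟨0, by simp [h0]⟩
  refine ⟨k₀, subset_antisymm (Finset.mem_filter.1 hk₀).2 fun b hb => ?_⟩
  obtain ⟨k, hk, hmin⟩ := (Finset.univ.filter fun j => b ∈ 𝓕 j).exists_min_image id
    ⟨Fin.last d, by simpa using hF_last hb⟩
  simp only [Finset.mem_filter, Finset.mem_univ, true_and, id] at hk hmin hmax
  exact hmono (hmax k (hup k b hb hmin)) hk

theorem flagCone_subset_flagCone_of_range_subset {d' : ℕ} {𝓕' : Fin (d' + 1) → Set α}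
    (hinj : Function.Injective 𝓕) (h0 : 𝓕' 0 = 𝓕 0) (hlast : 𝓕' (Fin.last d') = 𝓕 (Fin.last d))
    (hsub : Set.range 𝓕' ⊆ Set.range 𝓕) : flagCone d' 𝓕' ⊆ flagCone d 𝓕 := by
  rintro _ hx
  obtain ⟨lam', hlam', rfl⟩ := mem_flagCone_iff.1 hx
  choose σ hσ using fun j => hsub (Set.mem_range_self j)
  refine mem_flagCone_iff.2 ⟨fun i => ∑ j ∈ Finset.univ.filter (σ · = i), lam' j,
    fun i hi0 hid => Finset.sum_nonneg fun j hj => ?_, ?_⟩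
  · rw [Finset.mem_filter] at hj
    refine hlam' j ?_ ?_ <;> rintro rfl
    · exact hi0 (hinj ((hj.2 ▸ hσ 0).trans h0))
    · exact hid (hinj ((hj.2 ▸ hσ _).trans hlast))
  · rw [← Finset.sum_fiberwise Finset.univ σ]
    refine Finset.sum_congr rfl fun i _ => ?_
    rw [Finset.sum_smul]
    refine Finset.sum_congr rfl fun j hj => ?_
    rw [← hσ j, (Finset.mem_filter.1 hj).2]

end FlagCone

theorem flagCone_subset_iff_general {α : Type*} (M : Matroid α)
    (d d' : ℕ) (𝓕 : Fin (d + 1) → Set α) (𝓕' : Fin (d' + 1) → Set α)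
    (h𝓕 : IsFlag M d 𝓕) (h𝓕' : IsFlag M d' 𝓕') :
    flagCone d' 𝓕' ⊆ flagCone d 𝓕 ↔ Set.range 𝓕' ⊆ Set.range 𝓕 := by
  obtain ⟨-, hmono, h0, hlast⟩ := h𝓕
  obtain ⟨-, -, h0', hlast'⟩ := h𝓕'
  refine ⟨?_, flagCone_subset_flagCone_of_range_subset hmono.injective (h0'.trans h0.symm)
    (hlast'.trans hlast.symm)⟩
  rintro hcone _ ⟨j, rfl⟩
  exact mem_range_of_eVec_mem_flagCone hmono.monotone h0 (hcone (eVec_mem_flagCone 𝓕' j))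

/-- For flags of flats `𝓕, 𝓕'` of a matroid on a finite ground set,
`𝔠_{𝓕'} ⊆ 𝔠_𝓕` if and only if `|𝓕'| ⊆ |𝓕|`. -/
theorem flagCone_subset_iff {α : Type*} [Fintype α] (M : Matroid α) (hE : M.E = Set.univ)
    (d d' : ℕ) (𝓕 : Fin (d + 1) → Set α) (𝓕' : Fin (d' + 1) → Set α)
    (h𝓕 : IsFlag M d 𝓕) (h𝓕' : IsFlag M d' 𝓕') :
    flagCone d' 𝓕' ⊆ flagCone d 𝓕 ↔ Set.range 𝓕' ⊆ Set.range 𝓕 :=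
  flagCone_subset_iff_general M d d' 𝓕 𝓕' h𝓕 h𝓕'
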